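/- arXiv:2406.12391 — 2 statements merged into one kernel-verified Lean document; each statement's English description precedes it below -/
import Mathlib

section
/- Let H : ℝ^{n₁} × ℝ^{n₂} → ℝ be continuously differentiable, J ∈ ℝ^{n×n} skew-symmetric, R ∈ ℝ^{n×n} symmetric positive semi-definite with n = n₁+n₂+n₃, and let z₁, z₂, z₃ be differentiable curves satisfying the system [∂_{z₁}H(z₁,z₂); ż₂; 0] = (J − R)[ż₁; ∂_{z₂}H(z₁,z₂); z₃] (zero input). Then the function t ↦ H(z₁(t), z₂(t)) is nonincreasing, i.e., d/dt H(z₁(t), z₂(t)) ≤ 0 for all t. -/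
open Matrix

/-! Along a trajectory the energy rate is `⟨∂₁H, ż₁⟩ + ⟨∂₂H, ż₂⟩`, which is the pairing of the
left-hand side of the system with `x = [ż₁; ∂₂H; z₃]` (the last block pairs `z₃` with `0`).
By the system it equals `xᵀ (J - R) x = -xᵀ R x ≤ 0`, as `J` is skew. The chain rule applies
because continuity of the partial gradients makes `H` Fréchet differentiable, by the mean value
inequality along segments. -/

section LineDeriv

variable {E F : Type*} [NormedAddCommGroup E] [NormedSpace ℝ E]
  [NormedAddCommGroup F] [NormedSpace ℝ F]

theorem HasLineDerivAt.hasDerivAt_add_smul {f : E → F} {f' : F} {x v : E} {s : ℝ}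
    (hf : HasLineDerivAt ℝ f f' (x + s • v) v) :
    HasDerivAt (fun t : ℝ => f (x + t • v)) f' s := by
  have h := (show HasDerivAt (fun t : ℝ => f (x + s • v + t • v)) f' (s - s) by
    rw [sub_self]; exact hf).comp_sub_const s s
  refine h.congr_of_eventuallyEq (Filter.Eventually.of_forall fun t => ?_)
  simp only [add_assoc, ← add_smul, add_sub_cancel]

theorem hasFDerivAt_of_hasLineDerivAt_of_continuousAt {f : E → F} {L : E → E →L[ℝ] F} {x : E}
    (hf : ∀ᶠ y in nhds x, ∀ v, HasLineDerivAt ℝ f (L y v) y v) (hL : ContinuousAt L x) :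
    HasFDerivAt f (L x) x := by
  rw [hasFDerivAt_iff_isLittleO_nhds_zero, Asymptotics.isLittleO_iff]
  intro ε hε
  obtain ⟨δ, hδ, hball⟩ := Metric.eventually_nhds_iff_ball.1
    (hf.and (Metric.continuousAt_iff'.1 hL ε hε))
  filter_upwards [Metric.ball_mem_nhds 0 hδ] with h hh
  have hseg : ∀ s ∈ Set.Icc (0 : ℝ) 1, x + s • h ∈ Metric.ball x δ := fun s hs => by
    rw [Metric.mem_ball, dist_self_add_left, norm_smul, Real.norm_of_nonneg hs.1]
    exact lt_of_le_of_lt (mul_le_of_le_one_left (norm_nonneg h) hs.2) (mem_ball_zero_iff.1 hh)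
  -- mean value inequality for `s ↦ f (x + s • h) - s • L x h` on `[0, 1]`
  have key := norm_image_sub_le_of_norm_deriv_le_segment_01'
    (f := fun s : ℝ => f (x + s • h) - s • L x h) (f' := fun s => L (x + s • h) h - L x h)
    (C := ε * ‖h‖)
    (fun s hs => ((((hball _ (hseg s hs)).1 h).hasDerivAt_add_smul).sub
      ((hasDerivAt_id s).smul_const (L x h) |>.congr_deriv (one_smul ℝ _))).hasDerivWithinAt)
    (fun s hs => by
      rw [← _root_.sub_apply]
      refine (ContinuousLinearMap.le_opNorm _ h).trans ?_
      gcongr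
      exact ((hball _ (hseg s (Set.Ico_subset_Icc_self hs))).2).le.trans_eq' (dist_eq_norm _ _))
  simp only [one_smul, zero_smul, add_zero] at key
  convert key using 2
  abel

end LineDeriv

theorem dotProduct_append {R : Type*} [NonUnitalNonAssocSemiring R] {m n : ℕ}
    (a c : Fin m → R) (b d : Fin n → R) :
    Fin.append a b ⬝ᵥ Fin.append c d = a ⬝ᵥ c + b ⬝ᵥ d := by
  simp [dotProduct, Fin.sum_univ_add]

theorem Matrix.dotProduct_mulVec_self_eq_zero_of_transpose_eq_neg {R : Type*} [CommRing R]
    [IsAddTorsionFree R] {n : Type*} [Fintype n] {J : Matrix n n R} (hJ : Jᵀ = -J)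
    (x : n → R) : x ⬝ᵥ J *ᵥ x = 0 := by
  have h : x ⬝ᵥ J *ᵥ x = -(x ⬝ᵥ J *ᵥ x) := by
    conv_lhs => rw [dotProduct_mulVec, ← mulVec_transpose, hJ, neg_mulVec, neg_dotProduct,
      dotProduct_comm]
  exact self_eq_neg.1 h

theorem Matrix.dotProduct_sub_mulVec_nonpos {n : Type*} [Fintype n] {J R : Matrix n n ℝ}
    (hJ : Jᵀ = -J) (hR : R.PosSemidef) (x : n → ℝ) : x ⬝ᵥ (J - R) *ᵥ x ≤ 0 := by
  rw [sub_mulVec, dotProduct_sub, dotProduct_mulVec_self_eq_zero_of_transpose_eq_neg hJ,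
    zero_sub, neg_nonpos]
  simpa using hR.dotProduct_mulVec_nonneg x

noncomputable def dotProductProdCLM {m n : Type*} [Fintype m] [Fintype n]
    (g₁ : m → ℝ) (g₂ : n → ℝ) : ((m → ℝ) × (n → ℝ)) →L[ℝ] ℝ :=
  (LinearMap.toContinuousLinearMap (dotProductBilin ℝ ℝ g₁)).coprod
    (LinearMap.toContinuousLinearMap (dotProductBilin ℝ ℝ g₂))

@[simp] theorem dotProductProdCLM_apply {m n : Type*} [Fintype m] [Fintype n]
    (g₁ : m → ℝ) (g₂ : n → ℝ) (q : (m → ℝ) × (n → ℝ)) :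
    dotProductProdCLM g₁ g₂ q = g₁ ⬝ᵥ q.1 + g₂ ⬝ᵥ q.2 := rfl

theorem continuous_dotProductProdCLM {X m n : Type*} [TopologicalSpace X] [Fintype m] [Fintype n]
    {g₁ : X → m → ℝ} {g₂ : X → n → ℝ} (h₁ : Continuous g₁) (h₂ : Continuous g₂) :
    Continuous fun p => dotProductProdCLM (g₁ p) (g₂ p) :=
  continuous_clm_apply.2 fun q => by
    simp only [dotProductProdCLM_apply]
    fun_prop

theorem hasFDerivAt_uncurry_of_hasDerivAt_line {m n : Type*} [Fintype m] [Fintype n]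
    {H : (m → ℝ) → (n → ℝ) → ℝ} {G₁ : (m → ℝ) → (n → ℝ) → (m → ℝ)}
    {G₂ : (m → ℝ) → (n → ℝ) → (n → ℝ)}
    (hdiff : ∀ a b v w, HasDerivAt (fun s : ℝ => H (a + s • v) (b + s • w))
      (G₁ a b ⬝ᵥ v + G₂ a b ⬝ᵥ w) 0)
    (hcont : Continuous fun p : (m → ℝ) × (n → ℝ) => (G₁ p.1 p.2, G₂ p.1 p.2))
    (p : (m → ℝ) × (n → ℝ)) :
    HasFDerivAt (fun q : (m → ℝ) × (n → ℝ) => H q.1 q.2)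
      (dotProductProdCLM (G₁ p.1 p.2) (G₂ p.1 p.2)) p :=
  hasFDerivAt_of_hasLineDerivAt_of_continuousAt
    (f := fun q : (m → ℝ) × (n → ℝ) => H q.1 q.2)
    (L := fun q => dotProductProdCLM (G₁ q.1 q.2) (G₂ q.1 q.2))
    (Filter.Eventually.of_forall fun q v => hdiff q.1 q.2 v.1 v.2)
    (continuous_dotProductProdCLM (continuous_fst.comp hcont)
      (continuous_snd.comp hcont)).continuousAt

theorem stmt_0 {n₁ n₂ n₃ : ℕ}
    (H : (Fin n₁ → ℝ) → (Fin n₂ → ℝ) → ℝ)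
    (G₁ : (Fin n₁ → ℝ) → (Fin n₂ → ℝ) → (Fin n₁ → ℝ))
    (G₂ : (Fin n₁ → ℝ) → (Fin n₂ → ℝ) → (Fin n₂ → ℝ))
    -- H is differentiable with partial gradients G₁, G₂ ...
    (hdiff : ∀ (a : Fin n₁ → ℝ) (b : Fin n₂ → ℝ) (v : Fin n₁ → ℝ) (w : Fin n₂ → ℝ),
      HasDerivAt (fun s : ℝ => H (a + s • v) (b + s • w)) (G₁ a b ⬝ᵥ v + G₂ a b ⬝ᵥ w) 0)
    -- ... which are continuous (H is C¹)
    (hcont : Continuous fun p : (Fin n₁ → ℝ) × (Fin n₂ → ℝ) => (G₁ p.1 p.2, G₂ p.1 p.2))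
    (J R : Matrix (Fin (n₁ + n₂ + n₃)) (Fin (n₁ + n₂ + n₃)) ℝ)
    (hJ : Jᵀ = -J) (hR : R.PosSemidef)
    (z₁ : ℝ → Fin n₁ → ℝ) (z₂ : ℝ → Fin n₂ → ℝ) (z₃ : ℝ → Fin n₃ → ℝ)
    (z₁' : ℝ → Fin n₁ → ℝ) (z₂' : ℝ → Fin n₂ → ℝ)
    (hz₁ : ∀ t, HasDerivAt z₁ (z₁' t) t)
    (hz₂ : ∀ t, HasDerivAt z₂ (z₂' t) t)
    -- the system [∂_{z₁}H; ż₂; 0] = (J − R)[ż₁; ∂_{z₂}H; z₃]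
    (hsys : ∀ t,
      Fin.append (Fin.append (G₁ (z₁ t) (z₂ t)) (z₂' t)) (0 : Fin n₃ → ℝ)
        = (J - R).mulVec
            (Fin.append (Fin.append (z₁' t) (G₂ (z₁ t) (z₂ t))) (z₃ t))) :
    Antitone (fun t => H (z₁ t) (z₂ t)) ∧
      ∀ t, deriv (fun τ => H (z₁ τ) (z₂ τ)) t ≤ 0 := by
  have hrate : ∀ t, HasDerivAt (fun τ => H (z₁ τ) (z₂ τ))
      (G₁ (z₁ t) (z₂ t) ⬝ᵥ z₁' t + G₂ (z₁ t) (z₂ t) ⬝ᵥ z₂' t) t := fun t =>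
    (hasFDerivAt_uncurry_of_hasDerivAt_line hdiff hcont (z₁ t, z₂ t)).comp_hasDerivAt
      (f := fun τ => (z₁ τ, z₂ τ)) t ((hz₁ t).prodMk (hz₂ t))
  have hdissip : ∀ t, G₁ (z₁ t) (z₂ t) ⬝ᵥ z₁' t + G₂ (z₁ t) (z₂ t) ⬝ᵥ z₂' t ≤ 0 := fun t => by
    have h := congrArg (Fin.append (Fin.append (z₁' t) (G₂ (z₁ t) (z₂ t))) (z₃ t) ⬝ᵥ ·) (hsys t)
    simp only [dotProduct_append, dotProduct_zero, add_zero, dotProduct_comm (z₁' t)] at h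
    exact h ▸ dotProduct_sub_mulVec_nonpos hJ hR _
  have hderiv : ∀ t, deriv (fun τ => H (z₁ τ) (z₂ τ)) t ≤ 0 := fun t =>
    (hrate t).deriv ▸ hdissip t
  exact ⟨antitone_of_deriv_nonpos (fun t => (hrate t).differentiableAt) hderiv, hderiv⟩
end

section
/- Let H(z₁,z₂) = ½⟨z₁,M₁z₁⟩ + ½⟨z₂,M₂z₂⟩ with M₁, M₂ symmetric, J skew-symmetric, R symmetric positive semi-definite, τ > 0, and suppose (zⁿ, z^{n+1}) satisfy the midpoint scheme [τ∂_{z₁}H^{n+1/2}; z₂^{n+1}−z₂ⁿ; 0] = (J−R)[z₁^{n+1}−z₁ⁿ; τ∂_{z₂}H^{n+1/2}; τz₃^{n+1/2}] + τ[B₁;B₂;B₃]u^{n+1/2}, with output τy^{n+1/2} = [B₁ᵀ B₂ᵀ B₃ᵀ][z₁^{n+1}−z₁ⁿ; τ∂_{z₂}H^{n+1/2}; τz₃^{n+1/2}]. Then H(z^{n+1}) − H(zⁿ) ≤ τ⟨y^{n+1/2}, u^{n+1/2}⟩; in particular H(z^{n+1}) ≤ H(zⁿ) when u^{n+1/2}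 = 0. -/
/-!
Pair the left-hand side g of the scheme with the flow vector f. Since ∂H is linear and M₁, M₂
are symmetric, ⟨M(z + w)/2, w − z⟩ = H(w) − H(z) blockwise, so ⟨g, f⟩ = τ (H(zⁿ⁺¹) − H(zⁿ)) —
the midpoint rule is exact for quadratic energies. On the right-hand side, ⟨J f, f⟩ = 0 by skew
symmetry and ⟨R f, f⟩ ≥ 0, while ⟨τ B u, f⟩ = τ ⟨u, Bᵀ f⟩ = τ² ⟨y, u⟩. Dividing by τ > 0 gives
the inequality.
-/

open Matrix

theorem Fin.append_dotProduct_append {α : Type*} [NonUnitalNonAssocSemiring α] {p q : ℕ}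
    (a c : Fin p → α) (b d : Fin q → α) :
    Fin.append a b ⬝ᵥ Fin.append c d = a ⬝ᵥ c + b ⬝ᵥ d := by
  simp [dotProduct, Fin.sum_univ_add]

namespace Matrix

variable {ι α : Type*} [Fintype ι]

theorem IsSymm.mulVec_add_dotProduct_sub [CommRing α] {M : Matrix ι ι α} (hM : M.IsSymm)
    (a b : ι → α) :
    M *ᵥ (a + b) ⬝ᵥ (b - a) = b ⬝ᵥ M *ᵥ b - a ⬝ᵥ M *ᵥ a := by
  have hab : a ⬝ᵥ M *ᵥ b = b ⬝ᵥ M *ᵥ a := by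
    rw [dotProduct_mulVec, ← mulVec_transpose, hM.eq, dotProduct_comm]
  simp only [mulVec_add, add_dotProduct, dotProduct_sub, dotProduct_comm (M *ᵥ _)]
  rw [hab]
  ring

theorem mulVec_dotProduct_self_eq_zero_of_transpose_eq_neg [CommRing α] [IsAddTorsionFree α]
    {J : Matrix ι ι α} (hJ : Jᵀ = -J) (f : ι → α) :
    J *ᵥ f ⬝ᵥ f = 0 := by
  have h : J *ᵥ f ⬝ᵥ f = -(J *ᵥ f ⬝ᵥ f) := by
    conv_lhs => rw [dotProduct_comm, dotProduct_mulVec, ← mulVec_transpose, hJ]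
    rw [neg_mulVec, neg_dotProduct]
  exact self_eq_neg.mp h

/-- The power balance of a port-Hamiltonian system `g = (J - R) f + B v` with output `Bᵀ f`. -/
theorem dotProduct_le_of_skew_sub_posSemidef {κ : Type*} [Fintype κ]
    {J R : Matrix ι ι ℝ} (hJ : Jᵀ = -J) (hR : R.PosSemidef)
    (B : Matrix ι κ ℝ) (f : ι → ℝ) (v : κ → ℝ) :
    ((J - R) *ᵥ f + B *ᵥ v) ⬝ᵥ f ≤ v ⬝ᵥ Bᵀ *ᵥ f := by
  have hRf : 0 ≤ f ⬝ᵥ R *ᵥ f := by simpa using hR.dotProduct_mulVec_nonneg f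
  have hBv : B *ᵥ v ⬝ᵥ f = v ⬝ᵥ Bᵀ *ᵥ f := by
    rw [dotProduct_comm, dotProduct_mulVec, ← mulVec_transpose, dotProduct_comm]
  rw [add_dotProduct, sub_mulVec, sub_dotProduct, hBv,
    mulVec_dotProduct_self_eq_zero_of_transpose_eq_neg hJ, dotProduct_comm (R *ᵥ f)]
  linarith

end Matrix

theorem stmt_8_general {n₁ n₂ n₃ m : ℕ}
    (M₁ : Matrix (Fin n₁) (Fin n₁) ℝ) (M₂ : Matrix (Fin n₂) (Fin n₂) ℝ)
    (hM₁ : M₁.IsSymm) (hM₂ : M₂.IsSymm)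
    (H : (Fin n₁ → ℝ) → (Fin n₂ → ℝ) → ℝ)
    (hH : ∀ a b, H a b = (1 / 2) * (a ⬝ᵥ M₁.mulVec a) + (1 / 2) * (b ⬝ᵥ M₂.mulVec b))
    (J R : Matrix (Fin (n₁ + n₂ + n₃)) (Fin (n₁ + n₂ + n₃)) ℝ)
    (hJ : Jᵀ = -J) (hR : R.PosSemidef)
    (B : Matrix (Fin (n₁ + n₂ + n₃)) (Fin m) ℝ)
    (τ : ℝ) (hτ : 0 < τ)
    -- zⁿ = (z₁, z₂, z₃) and z^{n+1} = (w₁, w₂, w₃)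
    (z₁ w₁ : Fin n₁ → ℝ) (z₂ w₂ : Fin n₂ → ℝ) (z₃ w₃ : Fin n₃ → ℝ)
    (u y : Fin m → ℝ)
    -- f = [z₁^{n+1} − z₁ⁿ; τ ∂_{z₂}H^{n+1/2}; τ z₃^{n+1/2}]
    (f : Fin (n₁ + n₂ + n₃) → ℝ)
    (hf : f = Fin.append (Fin.append (w₁ - z₁)
        (τ • M₂.mulVec ((1 / 2 : ℝ) • (z₂ + w₂)))) (τ • ((1 / 2 : ℝ) • (z₃ + w₃))))
    -- midpoint scheme
    (hsys : Fin.append (Fin.append (τ • M₁.mulVec ((1 / 2 : ℝ) • (z₁ + w₁)))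
        (w₂ - z₂)) (0 : Fin n₃ → ℝ)
      = (J - R).mulVec f + τ • B.mulVec u)
    -- output equation
    (hout : τ • y = Bᵀ.mulVec f) :
    H w₁ w₂ - H z₁ z₂ ≤ τ * (y ⬝ᵥ u) ∧ (u = 0 → H w₁ w₂ ≤ H z₁ z₂) := by
  have energy : ((J - R) *ᵥ f + τ • B *ᵥ u) ⬝ᵥ f = τ * (H w₁ w₂ - H z₁ z₂) := by
    rw [← hsys, hf, Fin.append_dotProduct_append, Fin.append_dotProduct_append,
      zero_dotProduct, dotProduct_comm (w₂ - z₂)]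
    simp only [mulVec_smul, smul_dotProduct, hM₁.mulVec_add_dotProduct_sub,
      hM₂.mulVec_add_dotProduct_sub, hH, smul_eq_mul]
    ring
  have power := dotProduct_le_of_skew_sub_posSemidef hJ hR B f (τ • u)
  rw [mulVec_smul, energy, ← hout, smul_dotProduct, dotProduct_smul, dotProduct_comm u,
    smul_eq_mul, smul_eq_mul] at power
  have main : H w₁ w₂ - H z₁ z₂ ≤ τ * (y ⬝ᵥ u) := le_of_mul_le_mul_left power hτ
  refine ⟨main, fun hu => ?_⟩
  simpa [hu] using main

theorem stmt_8 {n₁ n₂ n₃ m : ℕ}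
    (M₁ : Matrix (Fin n₁) (Fin n₁) ℝ) (M₂ : Matrix (Fin n₂) (Fin n₂) ℝ)
    (hM₁ : M₁.IsSymm) (hM₂ : M₂.IsSymm)
    (H : (Fin n₁ → ℝ) → (Fin n₂ → ℝ) → ℝ)
    (hH : ∀ a b, H a b = (1 / 2) * (a ⬝ᵥ M₁.mulVec a) + (1 / 2) * (b ⬝ᵥ M₂.mulVec b))
    (J R : Matrix (Fin (n₁ + n₂ + n₃)) (Fin (n₁ + n₂ + n₃)) ℝ)
    (hJ : Jᵀ = -J) (hR : R.PosSemidef)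
    (B₁ : Matrix (Fin n₁) (Fin m) ℝ) (B₂ : Matrix (Fin n₂) (Fin m) ℝ)
    (B₃ : Matrix (Fin n₃) (Fin m) ℝ)
    (B : Matrix (Fin (n₁ + n₂ + n₃)) (Fin m) ℝ)
    (hB : B = Matrix.of (Fin.append (Fin.append B₁ B₂) B₃))
    (τ : ℝ) (hτ : 0 < τ)
    -- zⁿ = (z₁, z₂, z₃) and z^{n+1} = (w₁, w₂, w₃)
    (z₁ w₁ : Fin n₁ → ℝ) (z₂ w₂ : Fin n₂ → ℝ) (z₃ w₃ : Fin n₃ → ℝ)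
    (u y : Fin m → ℝ)
    -- f = [z₁^{n+1} − z₁ⁿ; τ ∂_{z₂}H^{n+1/2}; τ z₃^{n+1/2}]
    (f : Fin (n₁ + n₂ + n₃) → ℝ)
    (hf : f = Fin.append (Fin.append (w₁ - z₁)
        (τ • M₂.mulVec ((1 / 2 : ℝ) • (z₂ + w₂)))) (τ • ((1 / 2 : ℝ) • (z₃ + w₃))))
    -- midpoint scheme
    (hsys : Fin.append (Fin.append (τ • M₁.mulVec ((1 / 2 : ℝ) • (z₁ + w₁)))
        (w₂ - z₂)) (0 : Fin n₃ → ℝ)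
      = (J - R).mulVec f + τ • B.mulVec u)
    -- output equation
    (hout : τ • y = Bᵀ.mulVec f) :
    H w₁ w₂ - H z₁ z₂ ≤ τ * (y ⬝ᵥ u) ∧ (u = 0 → H w₁ w₂ ≤ H z₁ z₂) :=
  stmt_8_general M₁ M₂ hM₁ hM₂ H hH J R hJ hR B τ hτ z₁ w₁ z₂ w₂ z₃ w₃ u y f hf hsys hout
end
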